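/- On D, for all real numbers n and m, writing w^s for the principal complex power (well defined since q and q̄ have positive real part r > 0), the following derivative formulas hold: e₄(qⁿ q̄ᵐ) = (n/2 · trX + m/2 · conj(trX)) qⁿ q̄ᵐ, e₃(qⁿ q̄ᵐ) = (n/2 · conj(tr X̲) + m/2 · tr X̲) qⁿ q̄ᵐ, and (e₁ + i e₂)(qⁿ q̄ᵐ) = (n H̲₁ + m H₁) qⁿ q̄ᵐ. -/

import Mathlib

noncomputable section

namespace KerrNewman

/-- A point `x = (t, r, θ, φ)` of the coordinate domain, with indices `0,1,2,3`. -/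
abbrev Pt : Type := Fin 4 → ℝ

/-- Partial derivative `∂_μ` of a complex-valued function on `ℝ⁴`. -/
def pdC (μ : Fin 4) (f : Pt → ℂ) (x : Pt) : ℂ := fderiv ℝ f x (Pi.single μ 1)

/-- Partial derivative `∂_μ` of a real-valued function on `ℝ⁴`. -/
def pdR (μ : Fin 4) (f : Pt → ℝ) (x : Pt) : ℝ := fderiv ℝ f x (Pi.single μ 1)

/-- `Δ = r² − 2Mr + a² + Q²`. -/
def Del (M a Q : ℝ) (x : Pt) : ℝ := x 1 ^ 2 - 2 * M * x 1 + a ^ 2 + Q ^ 2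

/-- `|q|² = r² + a² cos²θ`. -/
def q2 (a : ℝ) (x : Pt) : ℝ := x 1 ^ 2 + a ^ 2 * Real.cos (x 2) ^ 2

/-- `q = r + i a cos θ`. -/
def qC (a : ℝ) (x : Pt) : ℂ := (x 1 : ℂ) + Complex.I * (a : ℂ) * (Real.cos (x 2) : ℂ)

/-- `q̄ = r − i a cos θ`. -/
def qbarC (a : ℝ) (x : Pt) : ℂ := (x 1 : ℂ) - Complex.I * (a : ℂ) * (Real.cos (x 2) : ℂ)

/-- `e₄ = ((r²+a²)/Δ)∂_t + ∂_r + (a/Δ)∂_φ` as an operator on complex functions. -/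
def e4 (M a Q : ℝ) (f : Pt → ℂ) (x : Pt) : ℂ :=
  (((x 1 ^ 2 + a ^ 2) / Del M a Q x : ℝ) : ℂ) * pdC 0 f x + pdC 1 f x
    + ((a / Del M a Q x : ℝ) : ℂ) * pdC 3 f x

/-- `e₃ = ((r²+a²)/|q|²)∂_t − (Δ/|q|²)∂_r + (a/|q|²)∂_φ` as an operator on
complex functions. -/
def e3 (M a Q : ℝ) (f : Pt → ℂ) (x : Pt) : ℂ :=
  (((x 1 ^ 2 + a ^ 2) / q2 a x : ℝ) : ℂ) * pdC 0 f x
    - ((Del M a Q x / q2 a x : ℝ) : ℂ) * pdC 1 f x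
    + ((a / q2 a x : ℝ) : ℂ) * pdC 3 f x

/-- `e₁ = (1/√(|q|²))∂_θ` as an operator on complex functions. -/
def e1 (a : ℝ) (f : Pt → ℂ) (x : Pt) : ℂ :=
  ((1 / Real.sqrt (q2 a x) : ℝ) : ℂ) * pdC 2 f x

/-- `e₂ = (a sinθ/√(|q|²))∂_t + (1/(√(|q|²) sinθ))∂_φ` as an operator on
complex functions. -/
def e2 (a : ℝ) (f : Pt → ℂ) (x : Pt) : ℂ :=
  ((a * Real.sin (x 2) / Real.sqrt (q2 a x) : ℝ) : ℂ) * pdC 0 f x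
    + ((1 / (Real.sqrt (q2 a x) * Real.sin (x 2)) : ℝ) : ℂ) * pdC 3 f x

/-- `e₄` as an operator on real-valued functions. -/
def e4R (M a Q : ℝ) (f : Pt → ℝ) (x : Pt) : ℝ :=
  ((x 1 ^ 2 + a ^ 2) / Del M a Q x) * pdR 0 f x + pdR 1 f x
    + (a / Del M a Q x) * pdR 3 f x

/-- `trX = 2/q`. -/
def trX (a : ℝ) (x : Pt) : ℂ := 2 / qC a x

/-- `tr X̲ = −2Δ/(q q̄²)`. -/
def trXb (M a Q : ℝ) (x : Pt) : ℂ :=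
  -2 * ((Del M a Q x : ℝ) : ℂ) / (qC a x * qbarC a x ^ 2)

/-- `H₁ = i a sinθ · q / |q|³`. -/
def H1 (a : ℝ) (x : Pt) : ℂ :=
  Complex.I * (a : ℂ) * (Real.sin (x 2) : ℂ) * qC a x
    / ((Real.sqrt (q2 a x) ^ 3 : ℝ) : ℂ)

/-- `H̲₁ = −i a sinθ · q̄ / |q|³`. -/
def Hb1 (a : ℝ) (x : Pt) : ℂ :=
  -(Complex.I * (a : ℂ) * (Real.sin (x 2) : ℂ) * qbarC a x
    / ((Real.sqrt (q2 a x) ^ 3 : ℝ) : ℂ))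

/-- `Z₁ = i a sinθ · q̄ / |q|³`. -/
def Z1 (a : ℝ) (x : Pt) : ℂ :=
  Complex.I * (a : ℂ) * (Real.sin (x 2) : ℂ) * qbarC a x
    / ((Real.sqrt (q2 a x) ^ 3 : ℝ) : ℂ)

/-- `P^F = Q/q̄²`. -/
def PF (a Q : ℝ) (x : Pt) : ℂ := (Q : ℂ) / qbarC a x ^ 2

/-- `P = −2M/q³ + 2Q²/(q³ q̄)`. -/
def Pc (M a Q : ℝ) (x : Pt) : ℂ :=
  -2 * (M : ℂ) / qC a x ^ 3 + 2 * (Q : ℂ) ^ 2 / (qC a x ^ 3 * qbarC a x)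

/-- `ω̲ = (a² cos²θ (r−M) + Mr² − a²r − Q²r)/|q|⁴`. -/
def omb (M a Q : ℝ) (x : Pt) : ℝ :=
  (a ^ 2 * Real.cos (x 2) ^ 2 * (x 1 - M) + M * x 1 ^ 2 - a ^ 2 * x 1 - Q ^ 2 * x 1)
    / q2 a x ^ 2

/-- `trχ̲ = −2rΔ/|q|⁴`. -/
def trchib (M a Q : ℝ) (x : Pt) : ℝ := -(2 * x 1 * Del M a Q x) / q2 a x ^ 2

/-- `atrχ̲ = 2aΔ cosθ/|q|⁴`. -/
def atrchib (M a Q : ℝ) (x : Pt) : ℝ :=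
  2 * a * Del M a Q x * Real.cos (x 2) / q2 a x ^ 2

/-- `atrχ = 2a cosθ/|q|²`. -/
def atrchi (a : ℝ) (x : Pt) : ℝ := 2 * a * Real.cos (x 2) / q2 a x

/-- `η₁ = −a² sinθ cosθ/|q|³`. -/
def eta1 (a : ℝ) (x : Pt) : ℝ :=
  -(a ^ 2 * Real.sin (x 2) * Real.cos (x 2)) / Real.sqrt (q2 a x) ^ 3

/-- `η₂ = a r sinθ/|q|³`. -/
def eta2 (a : ℝ) (x : Pt) : ℝ := a * x 1 * Real.sin (x 2) / Real.sqrt (q2 a x) ^ 3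

/-- `η̲₁ = −a² sinθ cosθ/|q|³`. -/
def etab1 (a : ℝ) (x : Pt) : ℝ :=
  -(a ^ 2 * Real.sin (x 2) * Real.cos (x 2)) / Real.sqrt (q2 a x) ^ 3

/-- `η̲₂ = −a r sinθ/|q|³`. -/
def etab2 (a : ℝ) (x : Pt) : ℝ := -(a * x 1 * Real.sin (x 2)) / Real.sqrt (q2 a x) ^ 3

/-- `*η₁ = a r sinθ/|q|³`. -/
def seta1 (a : ℝ) (x : Pt) : ℝ := a * x 1 * Real.sin (x 2) / Real.sqrt (q2 a x) ^ 3

/-- `*η₂ = a² sinθ cosθ/|q|³`. -/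
def seta2 (a : ℝ) (x : Pt) : ℝ :=
  a ^ 2 * Real.sin (x 2) * Real.cos (x 2) / Real.sqrt (q2 a x) ^ 3

/-- `*η̲₁ = −a r sinθ/|q|³`. -/
def setab1 (a : ℝ) (x : Pt) : ℝ := -(a * x 1 * Real.sin (x 2)) / Real.sqrt (q2 a x) ^ 3

/-- `*η̲₂ = a² sinθ cosθ/|q|³`. -/
def setab2 (a : ℝ) (x : Pt) : ℝ :=
  a ^ 2 * Real.sin (x 2) * Real.cos (x 2) / Real.sqrt (q2 a x) ^ 3

/-- `ρ = (−2Mr³ + 2Q²r² + 6Ma²r cos²θ − 2Q²a² cos²θ)/|q|⁶`. -/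
def rho (M a Q : ℝ) (x : Pt) : ℝ :=
  (-2 * M * x 1 ^ 3 + 2 * Q ^ 2 * x 1 ^ 2 + 6 * M * a ^ 2 * x 1 * Real.cos (x 2) ^ 2
      - 2 * Q ^ 2 * a ^ 2 * Real.cos (x 2) ^ 2) / q2 a x ^ 3

/-- `tr X̲ = trχ̲ − i atrχ̲` (component form). -/
def trXbC (M a Q : ℝ) (x : Pt) : ℂ :=
  ((trchib M a Q x : ℝ) : ℂ) - Complex.I * ((atrchib M a Q x : ℝ) : ℂ)

/-- `C = c·trχ̲ + i p·atrχ̲`. -/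
def Cfun (M a Q c p : ℝ) (x : Pt) : ℂ :=
  ((c * trchib M a Q x : ℝ) : ℂ) + Complex.I * ((p : ℝ) : ℂ) * ((atrchib M a Q x : ℝ) : ℂ)

/-!
Since `Re q = Re q̄ = r > 0`, both `q` and `q̄` lie in the slit plane, where the principal power
is differentiable; hence `qⁿ q̄ᵐ` has logarithmic derivative `n dq / q + m dq̄ / q̄`. Neither `q`
nor `q̄` depends on `t` or `φ`, `∂_r q = ∂_r q̄ = 1` and `∂_θ q = -∂_θ q̄ = -i a sin θ`, so each
frame identity reduces to an algebraic one, using `conj q = q̄` and `q q̄ = |q|²`.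
-/

theorem fderiv_cpow_mul_cpow_apply {E : Type*} [NormedAddCommGroup E] [NormedSpace ℝ E]
    {f g : E → ℂ} {f' g' : E →L[ℝ] ℂ} {x : E} (hf : HasFDerivAt f f' x) (hg : HasFDerivAt g g' x)
    (hfx : f x ∈ Complex.slitPlane) (hgx : g x ∈ Complex.slitPlane) (s t : ℂ) (v : E) :
    fderiv ℝ (fun y => f y ^ s * g y ^ t) x v
      = (s * f' v / f x + t * g' v / g x) * (f x ^ s * g x ^ t) := by
  have hfs : HasFDerivAt (fun y => f y ^ s) ((s * f x ^ (s - 1)) • f') x :=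
    (Complex.hasStrictDerivAt_cpow_const hfx).hasDerivAt.comp_hasFDerivAt x hf
  have hgt : HasFDerivAt (fun y => g y ^ t) ((t * g x ^ (t - 1)) • g') x :=
    (Complex.hasStrictDerivAt_cpow_const hgx).hasDerivAt.comp_hasFDerivAt x hg
  rw [HasFDerivAt.fderiv (f := fun y => f y ^ s * g y ^ t) (hfs.mul hgt)]
  simp only [add_apply, smul_apply, smul_eq_mul,
    Complex.cpow_sub _ _ (Complex.slitPlane_ne_zero hfx),
    Complex.cpow_sub _ _ (Complex.slitPlane_ne_zero hgx), Complex.cpow_one]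
  ring

theorem hasFDerivAt_r_add_mul_cos (c : ℂ) (x : Pt) :
    HasFDerivAt (fun y : Pt => (y 1 : ℂ) + c * (Real.cos (y 2) : ℂ))
      (Complex.ofRealCLM.comp (ContinuousLinearMap.proj 1)
        - (c * Real.sin (x 2)) • Complex.ofRealCLM.comp (ContinuousLinearMap.proj 2)) x := by
  have hr : HasFDerivAt (fun y : Pt => (y 1 : ℂ))
      (Complex.ofRealCLM.comp (ContinuousLinearMap.proj 1)) x :=
    Complex.ofRealCLM.hasFDerivAt.comp x (hasFDerivAt_apply 1 x)
  have hcos : HasFDerivAt (fun y : Pt => (Real.cos (y 2) : ℂ))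
      (Complex.ofRealCLM.comp (-Real.sin (x 2) • ContinuousLinearMap.proj 2)) x :=
    Complex.ofRealCLM.hasFDerivAt.comp x (hasFDerivAt_apply 2 x).cos
  refine (hr.add (hcos.const_mul c)).congr_fderiv ?_
  ext v
  simp only [ContinuousLinearMap.comp_smulₛₗ, Real.ringHom_apply, add_apply, sub_apply,
    smul_apply, ContinuousLinearMap.comp_apply, ContinuousLinearMap.proj_apply,
    Complex.ofRealCLM_apply, neg_smul, Complex.real_smul, smul_eq_mul]
  ring

theorem hasFDerivAt_qC (a : ℝ) (x : Pt) :
    HasFDerivAt (qC a)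
      (Complex.ofRealCLM.comp (ContinuousLinearMap.proj 1)
        - (Complex.I * a * Real.sin (x 2)) • Complex.ofRealCLM.comp (ContinuousLinearMap.proj 2))
      x :=
  hasFDerivAt_r_add_mul_cos (Complex.I * a) x

theorem hasFDerivAt_qbarC (a : ℝ) (x : Pt) :
    HasFDerivAt (qbarC a)
      (Complex.ofRealCLM.comp (ContinuousLinearMap.proj 1)
        - (-Complex.I * a * Real.sin (x 2)) • Complex.ofRealCLM.comp (ContinuousLinearMap.proj 2))
      x := by
  convert hasFDerivAt_r_add_mul_cos (-Complex.I * a) x using 1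
  ext y
  simp only [qbarC]
  ring

theorem qC_mem_slitPlane {a : ℝ} {x : Pt} (hr : 0 < x 1) : qC a x ∈ Complex.slitPlane :=
  Complex.mem_slitPlane_iff.2 (.inl (by simpa [qC] using hr))

theorem qbarC_mem_slitPlane {a : ℝ} {x : Pt} (hr : 0 < x 1) : qbarC a x ∈ Complex.slitPlane :=
  Complex.mem_slitPlane_iff.2 (.inl (by simpa [qbarC] using hr))

theorem qC_ne_zero {a : ℝ} {x : Pt} (hr : 0 < x 1) : qC a x ≠ 0 :=
  Complex.slitPlane_ne_zero (qC_mem_slitPlane hr)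

theorem qbarC_ne_zero {a : ℝ} {x : Pt} (hr : 0 < x 1) : qbarC a x ≠ 0 :=
  Complex.slitPlane_ne_zero (qbarC_mem_slitPlane hr)

theorem conj_qC (a : ℝ) (x : Pt) : starRingEnd ℂ (qC a x) = qbarC a x := by
  simp only [qC, qbarC, map_add, map_mul, Complex.conj_I, Complex.conj_ofReal]
  ring

theorem conj_qbarC (a : ℝ) (x : Pt) : starRingEnd ℂ (qbarC a x) = qC a x := by
  rw [← conj_qC, Complex.conj_conj]

theorem qC_mul_qbarC (a : ℝ) (x : Pt) : qC a x * qbarC a x = (q2 a x : ℂ) := by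
  simp only [qC, qbarC, q2, Complex.ofReal_add, Complex.ofReal_mul, Complex.ofReal_pow]
  linear_combination -(a : ℂ) ^ 2 * (Real.cos (x 2) : ℂ) ^ 2 * Complex.I_sq

theorem q2_pos {a : ℝ} {x : Pt} (hr : 0 < x 1) : 0 < q2 a x := by
  unfold q2
  positivity

def qPow (a n m : ℝ) (y : Pt) : ℂ := qC a y ^ (n : ℂ) * qbarC a y ^ (m : ℂ)

section qPow

variable {a : ℝ} {x : Pt} (n m : ℝ)

theorem pdC_qPow (hr : 0 < x 1) (μ : Fin 4) :
    pdC μ (qPow a n m) x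
      = ((n / qC a x + m / qbarC a x) * (Pi.single μ 1 : Pt) 1
          + Complex.I * a * Real.sin (x 2) * (m / qbarC a x - n / qC a x) * (Pi.single μ 1 : Pt) 2)
        * qPow a n m x := by
  unfold pdC qPow
  rw [fderiv_cpow_mul_cpow_apply (hasFDerivAt_qC a x) (hasFDerivAt_qbarC a x)
    (qC_mem_slitPlane hr) (qbarC_mem_slitPlane hr)]
  congr 1
  simp only [sub_apply, smul_apply, ContinuousLinearMap.coe_comp, Function.comp_apply,
    ContinuousLinearMap.proj_apply, Complex.ofRealCLM_apply, smul_eq_mul]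
  ring

theorem pdC_zero_qPow (hr : 0 < x 1) : pdC 0 (qPow a n m) x = 0 := by
  simp [pdC_qPow n m hr]

theorem pdC_one_qPow (hr : 0 < x 1) :
    pdC 1 (qPow a n m) x = (n / qC a x + m / qbarC a x) * qPow a n m x := by
  simp [pdC_qPow n m hr]

theorem pdC_two_qPow (hr : 0 < x 1) :
    pdC 2 (qPow a n m) x
      = Complex.I * a * Real.sin (x 2) * (m / qbarC a x - n / qC a x) * qPow a n m x := by
  simp [pdC_qPow n m hr]

theorem pdC_three_qPow (hr : 0 < x 1) : pdC 3 (qPow a n m) x = 0 := by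
  simp [pdC_qPow n m hr]

theorem e4_qPow (M Q : ℝ) (hr : 0 < x 1) :
    e4 M a Q (qPow a n m) x
      = (n / 2 * trX a x + m / 2 * starRingEnd ℂ (trX a x)) * qPow a n m x := by
  have hq : qC a x ≠ 0 := qC_ne_zero hr
  have hqbar : qbarC a x ≠ 0 := qbarC_ne_zero hr
  rw [e4, pdC_zero_qPow n m hr, pdC_one_qPow n m hr, pdC_three_qPow n m hr, trX, map_div₀,
    conj_qC, map_ofNat]
  field_simp
  ring

theorem e3_qPow (M Q : ℝ) (hr : 0 < x 1) :
    e3 M a Q (qPow a n m) x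
      = (n / 2 * starRingEnd ℂ (trXb M a Q x) + m / 2 * trXb M a Q x) * qPow a n m x := by
  have hq : qC a x ≠ 0 := qC_ne_zero hr
  have hqbar : qbarC a x ≠ 0 := qbarC_ne_zero hr
  rw [e3, pdC_zero_qPow n m hr, pdC_one_qPow n m hr, pdC_three_qPow n m hr, trXb]
  simp only [map_div₀, map_mul, map_pow, map_neg, map_ofNat, conj_qC, conj_qbarC,
    Complex.conj_ofReal, Complex.ofReal_div]
  rw [← qC_mul_qbarC]
  field_simp
  ring

theorem e1_add_I_mul_e2_qPow (hr : 0 < x 1) :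
    e1 a (qPow a n m) x + Complex.I * e2 a (qPow a n m) x
      = (n * Hb1 a x + m * H1 a x) * qPow a n m x := by
  have hq : qC a x ≠ 0 := qC_ne_zero hr
  have hqbar : qbarC a x ≠ 0 := qbarC_ne_zero hr
  have hsqrt_sq : ((√(q2 a x) : ℝ) : ℂ) ^ 2 = qC a x * qbarC a x := by
    rw [qC_mul_qbarC]
    exact_mod_cast Real.sq_sqrt (q2_pos hr).le
  have hsqrt : ((√(q2 a x) : ℝ) : ℂ) ≠ 0 := by
    exact_mod_cast (Real.sqrt_pos.2 (q2_pos hr)).ne'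
  rw [e1, e2, pdC_zero_qPow n m hr, pdC_two_qPow n m hr, pdC_three_qPow n m hr, H1, Hb1,
    Complex.ofReal_pow, pow_succ, hsqrt_sq]
  simp only [mul_zero, add_zero, Complex.ofReal_div, Complex.ofReal_one]
  field_simp
  ring

end qPow

theorem transport_q_powers_general (M a Q n m : ℝ) (x : Pt)
    (hr : 0 < x 1) :
    e4 M a Q (fun y => qC a y ^ (n : ℂ) * qbarC a y ^ (m : ℂ)) x
      = (((n : ℂ) / 2) * trX a x + ((m : ℂ) / 2) * (starRingEnd ℂ) (trX a x))
          * (qC a x ^ (n : ℂ) * qbarC a x ^ (m : ℂ)) ∧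
    e3 M a Q (fun y => qC a y ^ (n : ℂ) * qbarC a y ^ (m : ℂ)) x
      = (((n : ℂ) / 2) * (starRingEnd ℂ) (trXb M a Q x) + ((m : ℂ) / 2) * trXb M a Q x)
          * (qC a x ^ (n : ℂ) * qbarC a x ^ (m : ℂ)) ∧
    e1 a (fun y => qC a y ^ (n : ℂ) * qbarC a y ^ (m : ℂ)) x
        + Complex.I * e2 a (fun y => qC a y ^ (n : ℂ) * qbarC a y ^ (m : ℂ)) x
      = ((n : ℂ) * Hb1 a x + (m : ℂ) * H1 a x)
          * (qC a x ^ (n : ℂ) * qbarC a x ^ (m : ℂ)) :=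
  ⟨e4_qPow n m M Q hr, e3_qPow n m M Q hr, e1_add_I_mul_e2_qPow n m hr⟩

/-- on `D`, for all real `n, m`, with `qⁿ q̄ᵐ` the principal complex powers,
`e₄(qⁿq̄ᵐ) = (n/2·trX + m/2·conj(trX)) qⁿq̄ᵐ`,
`e₃(qⁿq̄ᵐ) = (n/2·conj(tr X̲) + m/2·tr X̲) qⁿq̄ᵐ`, and
`(e₁+ie₂)(qⁿq̄ᵐ) = (n H̲₁ + m H₁) qⁿq̄ᵐ`. -/
theorem transport_q_powers (M a Q n m : ℝ) (x : Pt)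
    (hr : 0 < x 1) (hθ₀ : 0 < x 2) (hθπ : x 2 < Real.pi)
    (hΔ : Del M a Q x ≠ 0) :
    e4 M a Q (fun y => qC a y ^ (n : ℂ) * qbarC a y ^ (m : ℂ)) x
      = (((n : ℂ) / 2) * trX a x + ((m : ℂ) / 2) * (starRingEnd ℂ) (trX a x))
          * (qC a x ^ (n : ℂ) * qbarC a x ^ (m : ℂ)) ∧
    e3 M a Q (fun y => qC a y ^ (n : ℂ) * qbarC a y ^ (m : ℂ)) x
      = (((n : ℂ) / 2) * (starRingEnd ℂ) (trXb M a Q x) + ((m : ℂ) / 2) * trXb M a Q x)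
          * (qC a x ^ (n : ℂ) * qbarC a x ^ (m : ℂ)) ∧
    e1 a (fun y => qC a y ^ (n : ℂ) * qbarC a y ^ (m : ℂ)) x
        + Complex.I * e2 a (fun y => qC a y ^ (n : ℂ) * qbarC a y ^ (m : ℂ)) x
      = ((n : ℂ) * Hb1 a x + (m : ℂ) * H1 a x)
          * (qC a x ^ (n : ℂ) * qbarC a x ^ (m : ℂ)) :=
  transport_q_powers_general M a Q n m x hr

end KerrNewman
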